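/- (Accumulation bound for momentum SGD without damping) Let f be L-smooth convex, and consider the scheme y_{k+1} = x_k + (1 - d_k/d_{k+1})(z_k - x_k), x_{k+1} = y_{k+1} - (η_k/d_{k+1}) G(y_{k+1}; i_k), z_{k+1} = z_k - ((d_{k+1}-d_k)/L) G(y_{k+1}; i_k), with d_k = k(k+1)/4, η_k = (k+1)(k+2)/(4L), e_k = (k+1)(k+3)/(4L), under an unbiased oracle with variance ≤ σ². Then d_{k+1} E_{i_k}[f(x_{k+1}) - f⋆] + (L/2) E_{i_k}‖z_{k+1} - x⋆‖² ≤ d_k (f(x_k) - f⋆) + (L/2)‖z_k - x⋆‖² + e_k σ². -/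

import Mathlib

/-!
Averaging over the samples, the descent lemma for the `x`-step and the expansion of the squared
distance for the `z`-step leave, besides `f y₁` and `‖z_k - x⋆‖²`, the cross term
`-(d_{k+1} - d_k) ⟪∇f y₁, z_k - x⋆⟫` and the terms `(A - η) ‖∇f y₁‖² + A V`, where `V` is the
sample variance and `A = L η² / (2 d_{k+1}) + (d_{k+1} - d_k)² / (2 L)`. Since `y₁` is the convex
combination of `x_k` and `z_k` with weights `d_k / d_{k+1}` and `1 - d_k / d_{k+1}`, the gradient
inequality of `f` at `y₁`, tested against `x_k` and `x⋆`, absorbs the cross term. The rest is at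
most `e σ²` as soon as `A ≤ η` and `A ≤ e`; for the given schedule `A = (k+1)(2k+3) / (8L)`.
-/

open Finset
open scoped RealInnerProductSpace

section Gradient
variable {F : Type*} [NormedAddCommGroup F] [InnerProductSpace ℝ F] [CompleteSpace F]
  {f : F → ℝ} {f' : F → F}

theorem hasDerivAt_comp_add_smul_of_hasGradientAt (hf : ∀ x, HasGradientAt f (f' x) x)
    (y v : F) (t : ℝ) :
    HasDerivAt (fun s : ℝ => f (y + s • v)) ⟪f' (y + t • v), v⟫ t := by
  have hline : HasDerivAt (fun s : ℝ => y + s • v) v t := by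
    simpa using ((hasDerivAt_id t).smul_const v).const_add y
  have := (hasGradientAt_iff_hasFDerivAt.mp (hf (y + t • v))).comp_hasDerivAt t hline
  simp only [InnerProductSpace.toDual_apply_apply] at this
  exact this

theorem ConvexOn.add_inner_le_of_hasGradientAt (hconv : ConvexOn ℝ Set.univ f)
    (hf : ∀ x, HasGradientAt f (f' x) x) (y u : F) :
    f y + ⟪f' y, u - y⟫ ≤ f u := by
  have hline : f ∘ AffineMap.lineMap y u = fun t : ℝ => f (y + t • (u - y)) := by
    ext t
    simp [AffineMap.lineMap_apply_module', add_comm]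
  have := (hconv.comp_affineMap (AffineMap.lineMap y u)).le_slope_of_hasDerivAt
    (Set.mem_univ 0) (Set.mem_univ 1) zero_lt_one
    (hline ▸ hasDerivAt_comp_add_smul_of_hasGradientAt hf y (u - y) 0)
  simp only [slope_def_field, Function.comp_apply, AffineMap.lineMap_apply_zero,
    AffineMap.lineMap_apply_one, sub_zero, div_one, zero_smul, add_zero] at this
  linarith

theorem le_add_inner_add_norm_sq_of_hasGradientAt (hf : ∀ x, HasGradientAt f (f' x) x)
    {L : ℝ} (hsmooth : ∀ x y, ‖f' x - f' y‖ ≤ L * ‖x - y‖) (y x : F) :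
    f x ≤ f y + ⟪f' y, x - y⟫ + L / 2 * ‖x - y‖ ^ 2 := by
  set v := x - y
  have hφ := hasDerivAt_comp_add_smul_of_hasGradientAt hf y v
  have hB : ∀ t : ℝ, HasDerivAt (fun t => f y + t * ⟪f' y, v⟫ + L / 2 * t ^ 2 * ‖v‖ ^ 2)
      (⟪f' y, v⟫ + L * t * ‖v‖ ^ 2) t := by
    intro t
    exact ((((hasDerivAt_id' t).mul_const ⟪f' y, v⟫).const_add (f y)).add
      (((hasDerivAt_pow 2 t).const_mul (L / 2)).mul_const (‖v‖ ^ 2))).congr_deriv (by ring)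
  have key := image_le_of_deriv_right_le_deriv_boundary (a := 0) (b := 1)
    (fun t _ => (hφ t).continuousAt.continuousWithinAt) (fun t _ => (hφ t).hasDerivWithinAt)
    (by simp) (fun t _ => (hB t).continuousAt.continuousWithinAt)
    (fun t _ => (hB t).hasDerivWithinAt) (fun t ht => ?_) (Set.right_mem_Icc.2 zero_le_one)
  · simpa [v] using key
  · have ht0 : 0 ≤ t := ht.1
    calc ⟪f' (y + t • v), v⟫ = ⟪f' y, v⟫ + ⟪f' (y + t • v) - f' y, v⟫ := by
          rw [inner_sub_left]; ring
      _ ≤ ⟪f' y, v⟫ + ‖f' (y + t • v) - f' y‖ * ‖v‖ := by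
          gcongr; exact real_inner_le_norm _ _
      _ ≤ ⟪f' y, v⟫ + L * ‖(y + t • v) - y‖ * ‖v‖ := by
          gcongr; exact hsmooth _ _
      _ = ⟪f' y, v⟫ + L * t * ‖v‖ ^ 2 := by
          rw [add_sub_cancel_left, norm_smul, Real.norm_of_nonneg ht0]; ring

end Gradient

section Sampling
variable {E ι : Type*} [NormedAddCommGroup E] [InnerProductSpace ℝ E] [Fintype ι]
  {G : ι → E} {g : E}

theorem inv_card_mul_sum_inner_eq (hG : (Fintype.card ι : ℝ)⁻¹ • ∑ i, G i = g) (a : E) :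
    (Fintype.card ι : ℝ)⁻¹ * ∑ i, ⟪a, G i⟫ = ⟪a, g⟫ := by
  rw [← hG, inner_smul_right, inner_sum]

theorem inv_card_mul_sum_sub_const [Nonempty ι] (a : ι → ℝ) (b : ℝ) :
    (Fintype.card ι : ℝ)⁻¹ * ∑ i, (a i - b) = (Fintype.card ι : ℝ)⁻¹ * ∑ i, a i - b := by
  have hcard : (Fintype.card ι : ℝ) ≠ 0 := Nat.cast_ne_zero.2 Fintype.card_ne_zero
  rw [sum_sub_distrib, sum_const, card_univ, nsmul_eq_mul]
  field_simp

theorem inv_card_mul_sum_norm_sub_smul_sq [Nonempty ι]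
    (hG : (Fintype.card ι : ℝ)⁻¹ • ∑ i, G i = g) (a : E) (c : ℝ) :
    (Fintype.card ι : ℝ)⁻¹ * ∑ i, ‖a - c • G i‖ ^ 2
      = ‖a - c • g‖ ^ 2 + c ^ 2 * ((Fintype.card ι : ℝ)⁻¹ * ∑ i, ‖G i - g‖ ^ 2) := by
  have hcard : (Fintype.card ι : ℝ) ≠ 0 := Nat.cast_ne_zero.2 Fintype.card_ne_zero
  have hcentered : ∑ i, ⟪a - c • g, G i - g⟫ = 0 := by
    have := inv_card_mul_sum_inner_eq hG (a - c • g)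
    simp only [inner_sub_right, sum_sub_distrib, sum_const, card_univ, nsmul_eq_mul]
    field_simp at this
    linarith
  have hsplit : ∀ i, ‖a - c • G i‖ ^ 2
      = ‖a - c • g‖ ^ 2 - 2 * c * ⟪a - c • g, G i - g⟫ + c ^ 2 * ‖G i - g‖ ^ 2 := by
    intro i
    rw [show a - c • G i = (a - c • g) - c • (G i - g) by rw [smul_sub]; abel,
      norm_sub_sq_real, inner_smul_right, norm_smul, mul_pow, Real.norm_eq_abs, sq_abs]
    ring
  simp only [hsplit, sum_add_distrib, sum_sub_distrib, ← mul_sum, hcentered, sum_const,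
    card_univ, nsmul_eq_mul]
  field_simp
  ring

end Sampling

section Step
variable {F ι : Type*} [NormedAddCommGroup F] [InnerProductSpace ℝ F] [CompleteSpace F]
  [Fintype ι] {f : F → ℝ} {f' : F → F}

theorem inv_card_mul_sum_sub_smul_le [Nonempty ι] (hf : ∀ x, HasGradientAt f (f' x) x)
    {L : ℝ} (hsmooth : ∀ x y, ‖f' x - f' y‖ ≤ L * ‖x - y‖) {y : F} {G : ι → F}
    (hG : (Fintype.card ι : ℝ)⁻¹ • ∑ i, G i = f' y) (c : ℝ) :
    (Fintype.card ι : ℝ)⁻¹ * ∑ i, f (y - c • G i)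
      ≤ f y - c * ‖f' y‖ ^ 2
        + L / 2 * c ^ 2 * (‖f' y‖ ^ 2 + (Fintype.card ι : ℝ)⁻¹ * ∑ i, ‖G i - f' y‖ ^ 2) := by
  have hcard : (Fintype.card ι : ℝ) ≠ 0 := Nat.cast_ne_zero.2 Fintype.card_ne_zero
  have hpoint : ∀ i, f (y - c • G i) ≤ f y - c * ⟪f' y, G i⟫ + L / 2 * ‖0 - c • G i‖ ^ 2 := by
    intro i
    have := le_add_inner_add_norm_sq_of_hasGradientAt hf hsmooth y (y - c • G i)
    rw [sub_sub_cancel_left, inner_neg_right, inner_smul_right] at this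
    rw [zero_sub]
    linarith
  have hinner := inv_card_mul_sum_inner_eq hG (f' y)
  have hnorm := inv_card_mul_sum_norm_sub_smul_sq hG 0 c
  rw [real_inner_self_eq_norm_sq] at hinner
  rw [zero_sub, norm_neg, norm_smul, mul_pow, Real.norm_eq_abs, sq_abs] at hnorm
  calc (Fintype.card ι : ℝ)⁻¹ * ∑ i, f (y - c • G i)
      ≤ (Fintype.card ι : ℝ)⁻¹ * ∑ i, (f y - c * ⟪f' y, G i⟫ + L / 2 * ‖0 - c • G i‖ ^ 2) := by
        gcongr with i; exact hpoint i
    _ = f y - c * ((Fintype.card ι : ℝ)⁻¹ * ∑ i, ⟪f' y, G i⟫)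
          + L / 2 * ((Fintype.card ι : ℝ)⁻¹ * ∑ i, ‖0 - c • G i‖ ^ 2) := by
        simp only [sum_add_distrib, sum_sub_distrib, ← mul_sum, sum_const, card_univ,
          nsmul_eq_mul]
        field_simp
    _ = _ := by rw [hinner, hnorm]; ring

theorem ConvexOn.apply_add_smul_sub_le_of_hasGradientAt (hconv : ConvexOn ℝ Set.univ f)
    (hf : ∀ x, HasGradientAt f (f' x) x) {θ : ℝ} (hθ₀ : 0 ≤ θ) (hθ₁ : θ ≤ 1) (x z u : F) :
    f (x + θ • (z - x)) ≤ (1 - θ) * f x + θ * f u + θ * ⟪f' (x + θ • (z - x)), z - u⟫ := by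
  set y := x + θ • (z - x)
  have hx := hconv.add_inner_le_of_hasGradientAt hf y x
  have hu := hconv.add_inner_le_of_hasGradientAt hf y u
  have hcomb : (1 - θ) * ⟪f' y, x - y⟫ + θ * ⟪f' y, u - y⟫ = -(θ * ⟪f' y, z - u⟫) := by
    simp only [y, inner_sub_right, inner_add_right, inner_smul_right]
    ring
  linarith [mul_le_mul_of_nonneg_left hx (sub_nonneg.2 hθ₁), mul_le_mul_of_nonneg_left hu hθ₀]

theorem momentum_sgd_potential_le [Nonempty ι] (hf : ∀ x, HasGradientAt f (f' x) x)
    (hconv : ConvexOn ℝ Set.univ f) {L : ℝ} (hL : 0 < L)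
    (hsmooth : ∀ x y, ‖f' x - f' y‖ ≤ L * ‖x - y‖) (xstar : F) {dk d1 η e σ : ℝ}
    (hd1 : 0 < d1) (hdk : 0 ≤ dk) (hdkd1 : dk ≤ d1)
    (hη : L * η ^ 2 / (2 * d1) + (d1 - dk) ^ 2 / (2 * L) ≤ η)
    (he : L * η ^ 2 / (2 * d1) + (d1 - dk) ^ 2 / (2 * L) ≤ e)
    {xk zk y1 : F} (hy1 : y1 = xk + (1 - dk / d1) • (zk - xk)) {G : ι → F}
    (hG : (Fintype.card ι : ℝ)⁻¹ • ∑ i, G i = f' y1)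
    (hvar : (Fintype.card ι : ℝ)⁻¹ * ∑ i, ‖G i - f' y1‖ ^ 2 ≤ σ ^ 2)
    {x1 z1 : ι → F} (hx1 : ∀ i, x1 i = y1 - (η / d1) • G i)
    (hz1 : ∀ i, z1 i = zk - ((d1 - dk) / L) • G i) :
    d1 * ((Fintype.card ι : ℝ)⁻¹ * ∑ i, (f (x1 i) - f xstar))
        + L / 2 * ((Fintype.card ι : ℝ)⁻¹ * ∑ i, ‖z1 i - xstar‖ ^ 2)
      ≤ dk * (f xk - f xstar) + L / 2 * ‖zk - xstar‖ ^ 2 + e * σ ^ 2 := by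
  set g := f' y1
  set V := (Fintype.card ι : ℝ)⁻¹ * ∑ i, ‖G i - g‖ ^ 2
  set A := L * η ^ 2 / (2 * d1) + (d1 - dk) ^ 2 / (2 * L)
  have hdist := inv_card_mul_sum_norm_sub_smul_sq hG (zk - xstar) ((d1 - dk) / L)
  have hconvex : d1 * f y1 ≤ dk * f xk + (d1 - dk) * f xstar + (d1 - dk) * ⟪g, zk - xstar⟫ := by
    have := mul_le_mul_of_nonneg_left (hconv.apply_add_smul_sub_le_of_hasGradientAt hf
      (sub_nonneg.2 ((div_le_one hd1).2 hdkd1)) (sub_le_self _ (div_nonneg hdk hd1.le))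
      xk zk xstar) hd1.le
    rw [← hy1, sub_sub_cancel] at this
    field_simp at this
    linarith
  rw [norm_sub_sq_real, inner_smul_right, norm_smul, mul_pow, Real.norm_eq_abs, sq_abs]
    at hdist
  have hV : 0 ≤ V := by positivity
  have hA : 0 ≤ A := by positivity
  calc d1 * ((Fintype.card ι : ℝ)⁻¹ * ∑ i, (f (x1 i) - f xstar))
        + L / 2 * ((Fintype.card ι : ℝ)⁻¹ * ∑ i, ‖z1 i - xstar‖ ^ 2)
      = d1 * ((Fintype.card ι : ℝ)⁻¹ * ∑ i, f (y1 - (η / d1) • G i) - f xstar)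
        + L / 2 * ((Fintype.card ι : ℝ)⁻¹ * ∑ i, ‖zk - xstar - ((d1 - dk) / L) • G i‖ ^ 2) := by
        simp only [hx1, hz1, sub_right_comm _ _ xstar, inv_card_mul_sum_sub_const]
    _ ≤ d1 * (f y1 - η / d1 * ‖g‖ ^ 2 + L / 2 * (η / d1) ^ 2 * (‖g‖ ^ 2 + V) - f xstar)
        + L / 2 * (‖zk - xstar‖ ^ 2 - 2 * ((d1 - dk) / L * ⟪zk - xstar, g⟫)
          + ((d1 - dk) / L) ^ 2 * ‖g‖ ^ 2 + ((d1 - dk) / L) ^ 2 * V) := by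
        rw [hdist]; gcongr; exact inv_card_mul_sum_sub_smul_le hf hsmooth hG (η / d1)
    _ = d1 * f y1 - (d1 - dk) * ⟪g, zk - xstar⟫ - d1 * f xstar + L / 2 * ‖zk - xstar‖ ^ 2
        + (A - η) * ‖g‖ ^ 2 + A * V := by
        rw [real_inner_comm]; simp only [A]; field_simp; ring
    _ ≤ dk * (f xk - f xstar) + L / 2 * ‖zk - xstar‖ ^ 2 + e * σ ^ 2 := by
        linarith [mul_nonpos_of_nonpos_of_nonneg (sub_nonpos.2 hη) (sq_nonneg ‖g‖),
          mul_le_mul he hvar hV (hA.trans he)]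

end Step

theorem momentum_sgd_accumulation_general {d n : ℕ} (hn : 0 < n)
    (L σ : ℝ) (hL : 0 < L)
    (f : EuclideanSpace ℝ (Fin d) → ℝ)
    (f' : EuclideanSpace ℝ (Fin d) → EuclideanSpace ℝ (Fin d))
    (hgrad : ∀ x, HasGradientAt f (f' x) x)
    (hconv : ConvexOn ℝ Set.univ f)
    (hsmooth : ∀ x y, ‖f' x - f' y‖ ≤ L * ‖x - y‖)
    (xstar : EuclideanSpace ℝ (Fin d))
    (k : ℕ) (dk d1 η e : ℝ)
    (hdk : dk = (k : ℝ) * ((k : ℝ) + 1) / 4)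
    (hd1 : d1 = ((k : ℝ) + 1) * ((k : ℝ) + 2) / 4)
    (hη : η = ((k : ℝ) + 1) * ((k : ℝ) + 2) / (4 * L))
    (he : e = ((k : ℝ) + 1) * ((k : ℝ) + 3) / (4 * L))
    (xk zk y1 : EuclideanSpace ℝ (Fin d))
    (hy1 : y1 = xk + (1 - dk / d1) • (zk - xk))
    (G : Fin n → EuclideanSpace ℝ (Fin d))
    (hunbiased : (n : ℝ)⁻¹ • (∑ i, G i) = f' y1)
    (hvar : (n : ℝ)⁻¹ * (∑ i, ‖G i - f' y1‖ ^ 2) ≤ σ ^ 2)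
    (x1 z1 : Fin n → EuclideanSpace ℝ (Fin d))
    (hx1 : ∀ i, x1 i = y1 - (η / d1) • G i)
    (hz1 : ∀ i, z1 i = zk - ((d1 - dk) / L) • G i) :
    d1 * ((n : ℝ)⁻¹ * ∑ i, (f (x1 i) - f xstar))
        + L / 2 * ((n : ℝ)⁻¹ * ∑ i, ‖z1 i - xstar‖ ^ 2)
      ≤ dk * (f xk - f xstar) + L / 2 * ‖zk - xstar‖ ^ 2 + e * σ ^ 2 := by
  have : Nonempty (Fin n) := Fin.pos_iff_nonempty.mp hn
  have hk : (0 : ℝ) ≤ k := k.cast_nonneg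
  have hcoeff : L * η ^ 2 / (2 * d1) + (d1 - dk) ^ 2 / (2 * L)
      = ((k : ℝ) + 1) * (2 * k + 3) / (8 * L) := by
    rw [hη, hd1, hdk]; field_simp; ring
  have key := momentum_sgd_potential_le hgrad hconv hL hsmooth xstar (e := e)
    (by rw [hd1]; positivity) (by rw [hdk]; positivity) (by rw [hdk, hd1]; nlinarith)
    (by rw [hcoeff, hη, div_le_div_iff₀ (by positivity) (by positivity)]; nlinarith)
    (by rw [hcoeff, he, div_le_div_iff₀ (by positivity) (by positivity)]; nlinarith)
    hy1 (by rwa [Fintype.card_fin]) (by rwa [Fintype.card_fin]) hx1 hz1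
  rwa [Fintype.card_fin] at key

/-- One-step potential inequality (with cubic variance accumulation) for a
momentum SGD scheme without damping. -/
theorem momentum_sgd_accumulation {d n : ℕ} (hn : 0 < n)
    (L σ : ℝ) (hL : 0 < L)
    (f : EuclideanSpace ℝ (Fin d) → ℝ)
    (f' : EuclideanSpace ℝ (Fin d) → EuclideanSpace ℝ (Fin d))
    (hgrad : ∀ x, HasGradientAt f (f' x) x)
    (hconv : ConvexOn ℝ Set.univ f)
    (hsmooth : ∀ x y, ‖f' x - f' y‖ ≤ L * ‖x - y‖)
    (xstar : EuclideanSpace ℝ (Fin d)) (hmin : ∀ y, f xstar ≤ f y)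
    (k : ℕ) (dk d1 η e : ℝ)
    (hdk : dk = (k : ℝ) * ((k : ℝ) + 1) / 4)
    (hd1 : d1 = ((k : ℝ) + 1) * ((k : ℝ) + 2) / 4)
    (hη : η = ((k : ℝ) + 1) * ((k : ℝ) + 2) / (4 * L))
    (he : e = ((k : ℝ) + 1) * ((k : ℝ) + 3) / (4 * L))
    (xk zk y1 : EuclideanSpace ℝ (Fin d))
    (hy1 : y1 = xk + (1 - dk / d1) • (zk - xk))
    (G : Fin n → EuclideanSpace ℝ (Fin d))
    (hunbiased : (n : ℝ)⁻¹ • (∑ i, G i) = f' y1)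
    (hvar : (n : ℝ)⁻¹ * (∑ i, ‖G i - f' y1‖ ^ 2) ≤ σ ^ 2)
    (x1 z1 : Fin n → EuclideanSpace ℝ (Fin d))
    (hx1 : ∀ i, x1 i = y1 - (η / d1) • G i)
    (hz1 : ∀ i, z1 i = zk - ((d1 - dk) / L) • G i) :
    d1 * ((n : ℝ)⁻¹ * ∑ i, (f (x1 i) - f xstar))
        + L / 2 * ((n : ℝ)⁻¹ * ∑ i, ‖z1 i - xstar‖ ^ 2)
      ≤ dk * (f xk - f xstar) + L / 2 * ‖zk - xstar‖ ^ 2 + e * σ ^ 2 :=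
  momentum_sgd_accumulation_general hn L σ hL f f' hgrad hconv hsmooth xstar k dk d1 η e hdk hd1 hη
    he xk zk y1 hy1 G hunbiased hvar x1 z1 hx1 hz1
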